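/- arXiv:1008.3237 — 3 statements merged into one kernel-verified Lean document; each statement's English description precedes it below -/
import Mathlib

section
/- Every mcs-cone C ⊂ P(B(K),B(H)) contains all conjugation maps Ad_V with rk V = 1: for every nonzero Φ ∈ C and every rank-one V : K → H, the map Ad_V belongs to C. -/
/-!
Write the rank-one `V` as `x cᵀ`. The projections `v v*` span all matrices (polarization), so
`Φ (v v*) ≠ 0` for some `v`; this matrix is positive semidefinite, hence has a positive diagonal
entry `λ = Φ (v v*)ᵢᵢ`. Then `Ad_{x eᵢᵀ} ∘ Φ ∘ Ad_{v cᵀ} = λ • Ad_V`. Conjugations are completely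
positive, so this map lies in the cone, and rescaling by `λ⁻¹` puts `Ad_V` there too.
-/

open Matrix BigOperators ComplexOrder
open scoped Kronecker ComplexConjugate

/-- Square complex matrices of size `d`, modeling `B(ℂ^d)`. -/
abbrev MatC (d : ℕ) := Matrix (Fin d) (Fin d) ℂ

/-- Hilbert–Schmidt (trace) inner product `⟨A, B⟩ = Tr (A B*)`. -/
noncomputable def hsInner {ι : Type*} [Fintype ι] (A B : Matrix ι ι ℂ) : ℂ :=
  (A * Bᴴ).trace

/-- Inner product of linear maps: `⟨Φ, Ψ⟩ = Σ_{k,l} ⟨Φ f_{kl}, Ψ f_{kl}⟩`. -/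
noncomputable def mapInner {a b : ℕ} (Φ Ψ : MatC a →ₗ[ℂ] MatC b) : ℂ :=
  ∑ k : Fin a, ∑ l : Fin a,
    hsInner (Φ (Matrix.single k l 1)) (Ψ (Matrix.single k l 1))

/-- The adjoint map `Φ*` w.r.t. the trace inner products, satisfying
`⟨A, Φ B⟩ = ⟨Φ* A, B⟩`. -/
noncomputable def adjointMap {a b : ℕ} (Φ : MatC a →ₗ[ℂ] MatC b) : MatC b →ₗ[ℂ] MatC a where
  toFun A := Matrix.of fun k l => hsInner A (Φ (Matrix.single k l 1))
  map_add' := by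
    intro A B; ext k l
    simp [hsInner, Matrix.add_mul]
  map_smul' := by
    intro c A; ext k l
    simp [hsInner, Matrix.smul_mul]

/-- The conjugation map `Ad_V : ρ ↦ V ρ V*`. -/
noncomputable def adMap {a b : ℕ} (V : Matrix (Fin b) (Fin a) ℂ) : MatC a →ₗ[ℂ] MatC b where
  toFun ρ := V * ρ * Vᴴ
  map_add' := by intro ρ σ; simp [Matrix.mul_add, Matrix.add_mul]
  map_smul' := by intro c ρ; simp [Matrix.mul_smul, Matrix.smul_mul]

/-- The map `Φ ⊗ id_k` acting on `Matrix (Fin a × Fin k)`. -/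
noncomputable def tensId {a b : ℕ} (Φ : MatC a →ₗ[ℂ] MatC b) (k : ℕ)
    (X : Matrix (Fin a × Fin k) (Fin a × Fin k) ℂ) :
    Matrix (Fin b × Fin k) (Fin b × Fin k) ℂ :=
  Matrix.of fun p q => Φ (Matrix.of fun i j => X (i, p.2) (j, q.2)) p.1 q.1

/-- `Φ` is `k`-positive if `Φ ⊗ id_k` preserves positive semidefiniteness. -/
def IsKPositive {a b : ℕ} (Φ : MatC a →ₗ[ℂ] MatC b) (k : ℕ) : Prop :=
  ∀ X : Matrix (Fin a × Fin k) (Fin a × Fin k) ℂ, X.PosSemidef → (tensId Φ k X).PosSemidef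

/-- `Φ` is completely positive if it is `k`-positive for all `k`. -/
def IsCompletelyPositive {a b : ℕ} (Φ : MatC a →ₗ[ℂ] MatC b) : Prop :=
  ∀ k : ℕ, IsKPositive Φ k

/-- Positive map: maps PSD matrices to PSD matrices. -/
def IsPosMap {a b : ℕ} (Φ : MatC a →ₗ[ℂ] MatC b) : Prop :=
  ∀ X : MatC a, X.PosSemidef → (Φ X).PosSemidef

/-- Hermiticity-preserving map. -/
def HermPreserving {a b : ℕ} (Φ : MatC a →ₗ[ℂ] MatC b) : Prop :=
  ∀ X, Φ Xᴴ = (Φ X)ᴴ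

/-- Choi–Jamiołkowski matrix `J(Φ) = Σ_{k,l} f_{kl} ⊗ Φ(f_{kl})`. -/
noncomputable def choi {a b : ℕ} (Φ : MatC a →ₗ[ℂ] MatC b) :
    Matrix (Fin a × Fin b) (Fin a × Fin b) ℂ :=
  ∑ k : Fin a, ∑ l : Fin a,
    (Matrix.single k l (1 : ℂ)) ⊗ₖ (Φ (Matrix.single k l 1))

noncomputable instance instTopMaps {a b : ℕ} : TopologicalSpace (MatC a →ₗ[ℂ] MatC b) :=
  TopologicalSpace.induced (fun Φ => (Φ : MatC a → MatC b)) inferInstance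

/-- A cone with a mapping cone symmetry (mcs-cone): a nonzero closed convex cone of
positive maps, stable under two-sided composition with completely positive maps. -/
def IsMcsCone {a b : ℕ} (C : Set (MatC a →ₗ[ℂ] MatC b)) : Prop :=
  (∃ Φ ∈ C, Φ ≠ 0) ∧ IsClosed C ∧
  (∀ Φ ∈ C, ∀ Ψ ∈ C, Φ + Ψ ∈ C) ∧
  (∀ Φ ∈ C, ∀ c : ℝ, 0 ≤ c → (c : ℂ) • Φ ∈ C) ∧
  (∀ Φ ∈ C, IsPosMap Φ) ∧
  (∀ Φ ∈ C, ∀ Υ : MatC b →ₗ[ℂ] MatC b, IsCompletelyPositive Υ →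
    ∀ Ω : MatC a →ₗ[ℂ] MatC a, IsCompletelyPositive Ω → Υ ∘ₗ Φ ∘ₗ Ω ∈ C)

/-- Dual cone inside Hermiticity-preserving maps. -/
def dualCone {a b : ℕ} (C : Set (MatC a →ₗ[ℂ] MatC b)) : Set (MatC a →ₗ[ℂ] MatC b) :=
  {Ψ | HermPreserving Ψ ∧ ∀ Φ ∈ C, 0 ≤ mapInner Ψ Φ}

namespace Matrix

theorem exists_eq_vecMulVec_of_rank_le_one {m n K : Type*} [Fintype n] [Field K]
    {V : Matrix m n K} (hV : V.rank ≤ 1) : ∃ (x : m → K) (c : n → K), V = vecMulVec x c := by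
  classical
  obtain ⟨x, hspan⟩ := finrank_le_one_iff.mp (show Module.finrank K _ ≤ 1 from hV)
  choose c hc using fun j => hspan ⟨V.mulVecLin (Pi.single j 1), LinearMap.mem_range_self _ _⟩
  refine ⟨x, c, ?_⟩
  ext i j
  have h := congrFun (congrArg Subtype.val (hc j)) i
  simp only [Submodule.coe_smul, Pi.smul_apply, smul_eq_mul, mulVecLin_apply,
    mulVec_single_one, col_apply] at h
  rw [vecMulVec_apply, mul_comm, h]

theorem vecMulVec_star_polarization {ι : Type*} (x y : ι → ℂ) :
    (4 : ℂ) • vecMulVec x (star y) =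
      vecMulVec (x + y) (star (x + y))
      + Complex.I • vecMulVec (x + Complex.I • y) (star (x + Complex.I • y))
      - vecMulVec (x - y) (star (x - y))
      - Complex.I • vecMulVec (x - Complex.I • y) (star (x - Complex.I • y)) := by
  ext i j
  simp only [smul_apply, sub_apply, add_apply, vecMulVec_apply, Pi.star_apply, Pi.add_apply,
    Pi.sub_apply, Pi.smul_apply, smul_eq_mul, star_add, star_sub, star_mul', Complex.star_def,
    Complex.conj_I]
  linear_combination (2 * x i * (starRingEnd ℂ) (y j) - 2 * y i * (starRingEnd ℂ) (x j)) * Complex.I_sq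

theorem linearMap_eq_zero_of_apply_vecMulVec_self_star {ι M : Type*} [Fintype ι] [DecidableEq ι]
    [AddCommGroup M] [Module ℂ M] {Φ : Matrix ι ι ℂ →ₗ[ℂ] M}
    (hΦ : ∀ v : ι → ℂ, Φ (vecMulVec v (star v)) = 0) : Φ = 0 := by
  have hrankOne : ∀ x y : ι → ℂ, Φ (vecMulVec x (star y)) = 0 := by
    intro x y
    have h := congrArg Φ (vecMulVec_star_polarization x y)
    simp only [map_smul, map_add, map_sub, hΦ, smul_zero, add_zero, sub_zero] at h
    exact (smul_eq_zero.mp h).resolve_left four_ne_zero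
  refine ext_linearMap ℂ fun i j => LinearMap.ext fun a => ?_
  have hsingle : single i j a = a • vecMulVec (Pi.single i 1) (star (Pi.single j 1)) := by
    rw [Pi.star_single, star_one, ← single_eq_single_vecMulVec_single, smul_single, smul_eq_mul,
      mul_one]
  rw [LinearMap.comp_apply, singleLinearMap_apply, hsingle, map_smul, hrankOne, smul_zero,
    LinearMap.zero_comp, LinearMap.zero_apply]

theorem PosSemidef.exists_diag_pos {ι 𝕜 : Type*} [Fintype ι] [RCLike 𝕜] {A : Matrix ι ι 𝕜}
    (hA : A.PosSemidef) (hA0 : A ≠ 0) : ∃ i, 0 < A i i := by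
  obtain ⟨i, -, hi⟩ := Finset.exists_ne_zero_of_sum_ne_zero (mt hA.trace_eq_zero_iff.mp hA0)
  exact ⟨i, hA.diag_nonneg.lt_of_ne' hi⟩

end Matrix

open Matrix

section Conjugation

variable {a b : ℕ}

theorem tensId_adMap (V : Matrix (Fin b) (Fin a) ℂ) {k : ℕ}
    (X : Matrix (Fin a × Fin k) (Fin a × Fin k) ℂ) :
    tensId (adMap V) k X
      = (V ⊗ₖ (1 : Matrix (Fin k) (Fin k) ℂ)) * X * (V ⊗ₖ (1 : Matrix (Fin k) (Fin k) ℂ))ᴴ := by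
  ext ⟨p1, p2⟩ ⟨q1, q2⟩
  simp [tensId, adMap, mul_apply, Fintype.sum_prod_type, one_apply,
    Finset.mul_sum, apply_ite, mul_comm, mul_left_comm]

theorem isCompletelyPositive_adMap (V : Matrix (Fin b) (Fin a) ℂ) :
    IsCompletelyPositive (adMap V) := fun k X hX => by
  rw [tensId_adMap]
  exact hX.mul_mul_conjTranspose_same _

theorem adMap_vecMulVec_apply (x : Fin b → ℂ) (z : Fin a → ℂ) (ρ : MatC a) :
    adMap (vecMulVec x z) ρ = (z ⬝ᵥ ρ *ᵥ star z) • vecMulVec x (star x) := by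
  ext p q
  simp only [adMap, LinearMap.coe_mk, AddHom.coe_mk, mul_apply, vecMulVec_apply,
    conjTranspose_apply, Matrix.smul_apply, smul_eq_mul, dotProduct, mulVec, Pi.star_apply,
    Finset.sum_mul, Finset.mul_sum, star_mul']
  rw [Finset.sum_comm]
  exact Finset.sum_congr rfl fun i _ => Finset.sum_congr rfl fun j _ => by ring

theorem adMap_comp_comp_adMap_vecMulVec (Φ : MatC a →ₗ[ℂ] MatC b) (x : Fin b → ℂ)
    (v c : Fin a → ℂ) (i : Fin b) :
    adMap (vecMulVec x (Pi.single i 1)) ∘ₗ Φ ∘ₗ adMap (vecMulVec v c)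
      = Φ (vecMulVec v (star v)) i i • adMap (vecMulVec x c) := by
  ext1 ρ
  simp only [LinearMap.comp_apply, LinearMap.smul_apply, adMap_vecMulVec_apply, map_smul,
    smul_smul, Pi.star_single, star_one, single_dotProduct, one_mul, mulVec_single_one, col_apply]
  rw [mul_comm]

end Conjugation

theorem IsMcsCone.mem_of_pos_smul_mem {a b : ℕ} {C : Set (MatC a →ₗ[ℂ] MatC b)}
    (hC : IsMcsCone C) {z : ℂ} (hz : 0 < z) {Ψ : MatC a →ₗ[ℂ] MatC b} (h : z • Ψ ∈ C) :
    Ψ ∈ C := by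
  obtain ⟨hre_pos, him⟩ := Complex.pos_iff.mp hz
  have hre : z = (z.re : ℂ) := Complex.ext rfl (by simp [him])
  have := hC.2.2.2.1 _ h z.re⁻¹ (inv_nonneg.mpr hre_pos.le)
  rwa [smul_smul, hre, ← Complex.ofReal_mul, Complex.ofReal_re, inv_mul_cancel₀ hre_pos.ne',
    Complex.ofReal_one, one_smul] at this

/-- Every mcs-cone contains all conjugation maps `Ad_V` with `rk V = 1`. -/
theorem stmt9 {m n : ℕ} (C : Set (MatC m →ₗ[ℂ] MatC n)) (hC : IsMcsCone C)
    (Φ : MatC m →ₗ[ℂ] MatC n) (hΦC : Φ ∈ C) (hΦ : Φ ≠ 0) :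
    ∀ V : Matrix (Fin n) (Fin m) ℂ, V.rank = 1 → adMap V ∈ C := by
  intro V hV
  obtain ⟨hpos, hcompCP⟩ := hC.2.2.2.2
  obtain ⟨x, c, rfl⟩ := exists_eq_vecMulVec_of_rank_le_one hV.le
  obtain ⟨v, hv⟩ : ∃ v, Φ (vecMulVec v (star v)) ≠ 0 := by
    by_contra! h
    exact hΦ (linearMap_eq_zero_of_apply_vecMulVec_self_star h)
  have hpsd := hpos Φ hΦC _ (posSemidef_vecMulVec_self_star v)
  obtain ⟨i, hi⟩ := hpsd.exists_diag_pos hv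
  have hcomp := hcompCP Φ hΦC _ (isCompletelyPositive_adMap (vecMulVec x (Pi.single i 1)))
    _ (isCompletelyPositive_adMap (vecMulVec v c))
  rw [adMap_comp_comp_adMap_vecMulVec] at hcomp
  exact hC.mem_of_pos_smul_mem hi hcomp
end

section
/- A Hermiticity-preserving map Φ : B(K) → B(H) is k-positive if and only if Ad_{V*}∘Φ is completely positive on B(K) for all V : K → H with rank V ≤ k, if and only if Φ∘Ad_{V*} is completely positive on B(H) for all such V. -/
open Matrix BigOperators ComplexOrder
open scoped Kronecker ComplexConjugate

/-!
Everything is read off the quadratic form `G ↦ ⟨vec G, J(Φ) vec G⟩` of the Choi matrix on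
matrices `G : ℂ^m → ℂ^n`. Testing `(Φ ⊗ id_l)(z z*)` against a vector `y` gives this form at a
matrix of rank `≤ l` built from `y` and `z`, every matrix of rank `≤ l` arises this way, and every
positive matrix is a sum of such `z z*`; so `Φ` is `l`-positive iff the form is nonnegative on
matrices of rank `≤ l`, and completely positive iff it is nonnegative everywhere.
The Choi matrices of `Ad_{V*} ∘ Φ` and `Φ ∘ Ad_{V*}` are congruent to `J(Φ)` via `1 ⊗ V` and
`Vᵀ ⊗ 1`, so their forms at `G` are the form of `Φ` at `V G` and `G V`. As `rk (V G)` and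
`rk (G V)` are at most `rk V`, and `V = V 1 = 1 V`, both conditions say exactly that the form of
`Φ` is nonnegative on matrices of rank `≤ k`.
-/

theorem Matrix.exists_mul_eq_of_rank_le {K : Type*} [Field K] {m n : Type*} [Fintype m]
    [Fintype n] [DecidableEq n] {A : Matrix m n K} {k : ℕ} (h : A.rank ≤ k) :
    ∃ (B : Matrix m (Fin k) K) (C : Matrix (Fin k) n K), A = B * C := by
  obtain ⟨f, hf⟩ := (finrank_le_iff_exists_linearMap (R := K)
    (M := LinearMap.range A.mulVecLin) (M' := Fin k → K)).1 (by simpa [Matrix.rank] using h)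
  obtain ⟨g, hg⟩ := f.exists_leftInverse_of_injective (LinearMap.ker_eq_bot.2 hf)
  refine ⟨LinearMap.toMatrix' ((LinearMap.range A.mulVecLin).subtype ∘ₗ g),
    LinearMap.toMatrix' (f ∘ₗ A.mulVecLin.rangeRestrict), ?_⟩
  rw [← LinearMap.toMatrix'_comp, LinearMap.comp_assoc, ← LinearMap.comp_assoc _ f g, hg,
    LinearMap.id_comp]
  exact (LinearMap.toMatrix'_toLin' A).symm

lemma choi_apply {a b : ℕ} (Φ : MatC a →ₗ[ℂ] MatC b) (c d : Fin a) (i j : Fin b) :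
    choi Φ (c, i) (d, j) = Φ (single c d 1) i j := by
  simp [choi, Matrix.sum_apply, kroneckerMap_apply, single, ite_and]

lemma apply_eq_sum_choi {a b : ℕ} (Φ : MatC a →ₗ[ℂ] MatC b) (M : MatC a) (i j : Fin b) :
    Φ M i j = ∑ c, ∑ d, M c d * choi Φ (c, i) (d, j) := by
  conv_lhs => rw [matrix_eq_sum_single M]
  have (c d : Fin a) : single c d (M c d) = M c d • single c d 1 := by simp
  simp only [this, map_sum, map_smul, Matrix.sum_apply, Matrix.smul_apply, smul_eq_mul, choi_apply]

lemma tensId_apply {a b l : ℕ} (Φ : MatC a →ₗ[ℂ] MatC b)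
    (X : Matrix (Fin a × Fin l) (Fin a × Fin l) ℂ) (i j : Fin b) (s t : Fin l) :
    tensId Φ l X (i, s) (j, t) = ∑ c, ∑ d, X (c, s) (d, t) * choi Φ (c, i) (d, j) :=
  apply_eq_sum_choi Φ _ i j

lemma tensId_sum {a b l : ℕ} (Φ : MatC a →ₗ[ℂ] MatC b) {ι : Type*} (s : Finset ι)
    (X : ι → Matrix (Fin a × Fin l) (Fin a × Fin l) ℂ) :
    tensId Φ l (∑ r ∈ s, X r) = ∑ r ∈ s, tensId Φ l (X r) := by
  ext ⟨i, u⟩ ⟨j, v⟩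
  simp only [tensId_apply, Matrix.sum_apply, Finset.sum_mul]
  conv_lhs => enter [2, c]; rw [Finset.sum_comm]
  exact Finset.sum_comm

/-- `vec` stacks columns, so `vec G (c, i) = G i c` matches the `(input, output)` index order
of `choi`. -/
noncomputable def choiForm {a b : ℕ} (Φ : MatC a →ₗ[ℂ] MatC b) (G : Matrix (Fin b) (Fin a) ℂ) :
    ℂ :=
  star (vec G) ⬝ᵥ choi Φ *ᵥ vec G

lemma dotProduct_tensId_vecMulVec {a b l : ℕ} (Φ : MatC a →ₗ[ℂ] MatC b)
    (P : Matrix (Fin b) (Fin l) ℂ) (Z : Matrix (Fin a) (Fin l) ℂ) :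
    star (vec Pᵀ) ⬝ᵥ tensId Φ l (vecMulVec (vec Zᵀ) (star (vec Zᵀ))) *ᵥ vec Pᵀ
      = choiForm Φ (P * Zᴴ) := by
  simp only [choiForm, dotProduct, mulVec, Fintype.sum_prod_type, tensId_apply, vec,
    vecMulVec_apply, transpose_apply, mul_apply, conjTranspose_apply, Pi.star_apply, star_sum,
    star_mul', star_star, Finset.sum_mul, Finset.mul_sum]
  simp only [← Finset.sum_product', Finset.univ_product_univ]
  -- both sides are one sum over `(i, s, j, t, c, d)`, taken in different orders
  exact Fintype.sum_equiv
    ⟨fun x => (x.2.2.2.2.1, x.1, x.2.2.2.2.2, x.2.2.1, x.2.2.2.1, x.2.1),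
     fun x => (x.2.1, x.2.2.2.2.2, x.2.2.2.1, x.2.2.2.2.1, x.1, x.2.2.1),
     fun _ => rfl, fun _ => rfl⟩ _ _ fun _ => by simp only [Equiv.coe_fn_mk]; ring

@[simp]
lemma adMap_apply {a b : ℕ} (W : Matrix (Fin b) (Fin a) ℂ) (ρ : MatC a) :
    adMap W ρ = W * ρ * Wᴴ :=
  rfl

lemma choi_adMap_comp {a b c : ℕ} (Φ : MatC a →ₗ[ℂ] MatC b) (W : Matrix (Fin c) (Fin b) ℂ) :
    choi (adMap W ∘ₗ Φ) = ((1 : MatC a) ⊗ₖ W) * choi Φ * ((1 : MatC a) ⊗ₖ W)ᴴ := by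
  simp only [choi, Matrix.mul_sum, Matrix.sum_mul, conjTranspose_kronecker, conjTranspose_one,
    ← mul_kronecker_mul, Matrix.one_mul, Matrix.mul_one, LinearMap.comp_apply, adMap_apply]

lemma choi_comp_adMap {a b c : ℕ} (Φ : MatC a →ₗ[ℂ] MatC b) (W : Matrix (Fin a) (Fin c) ℂ) :
    choi (Φ ∘ₗ adMap W) = (Wᵀ ⊗ₖ (1 : MatC b)) * choi Φ * (Wᵀ ⊗ₖ (1 : MatC b))ᴴ := by
  ext ⟨c, i⟩ ⟨d, j⟩
  rw [choi_apply, LinearMap.comp_apply, apply_eq_sum_choi]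
  simp only [adMap_apply, mul_apply, conjTranspose_apply, kroneckerMap_apply, transpose_apply,
    one_apply, single_apply, Fintype.sum_prod_type]
  simp only [ite_and, mul_ite, mul_one, mul_zero, Finset.sum_ite_eq, Finset.mem_univ, ↓reduceIte,
    RCLike.star_def, ite_mul, zero_mul, apply_ite (starRingEnd ℂ), map_zero, Finset.sum_mul]
  rw [Finset.sum_comm]
  exact Finset.sum_congr rfl fun _ _ => Finset.sum_congr rfl fun _ _ => by ring

lemma dotProduct_mul_mul_conjTranspose_mulVec {R ι κ : Type*} [CommSemiring R] [StarRing R]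
    [Fintype ι] [Fintype κ] (M : Matrix ι κ R) (J : Matrix κ κ R) (v : ι → R) :
    star v ⬝ᵥ (M * J * Mᴴ) *ᵥ v = star (Mᴴ *ᵥ v) ⬝ᵥ J *ᵥ (Mᴴ *ᵥ v) := by
  rw [← mulVec_mulVec, ← mulVec_mulVec, dotProduct_mulVec, star_mulVec,
    conjTranspose_conjTranspose]

lemma choiForm_adMap_comp {a b c : ℕ} (Φ : MatC a →ₗ[ℂ] MatC b) (W : Matrix (Fin c) (Fin b) ℂ)
    (G : Matrix (Fin c) (Fin a) ℂ) : choiForm (adMap W ∘ₗ Φ) G = choiForm Φ (Wᴴ * G) := by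
  rw [choiForm, choi_adMap_comp, dotProduct_mul_mul_conjTranspose_mulVec, conjTranspose_kronecker,
    conjTranspose_one, kronecker_mulVec_vec, transpose_one, Matrix.mul_one, choiForm]

lemma choiForm_comp_adMap {a b c : ℕ} (Φ : MatC a →ₗ[ℂ] MatC b) (W : Matrix (Fin a) (Fin c) ℂ)
    (G : Matrix (Fin b) (Fin c) ℂ) : choiForm (Φ ∘ₗ adMap W) G = choiForm Φ (G * Wᴴ) := by
  rw [choiForm, choi_comp_adMap, dotProduct_mul_mul_conjTranspose_mulVec, conjTranspose_kronecker,
    conjTranspose_one, kronecker_mulVec_vec, Matrix.one_mul, transpose_conjTranspose, choiForm]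
  rfl

lemma HermPreserving.adMap_comp {a b c : ℕ} {Φ : MatC a →ₗ[ℂ] MatC b} (hΦ : HermPreserving Φ)
    (W : Matrix (Fin c) (Fin b) ℂ) : HermPreserving (adMap W ∘ₗ Φ) := fun X => by
  simp [hΦ X, conjTranspose_mul, Matrix.mul_assoc]

lemma HermPreserving.comp_adMap {a b c : ℕ} {Φ : MatC a →ₗ[ℂ] MatC b} (hΦ : HermPreserving Φ)
    (W : Matrix (Fin a) (Fin c) ℂ) : HermPreserving (Φ ∘ₗ adMap W) := fun X => by
  rw [LinearMap.comp_apply, LinearMap.comp_apply, ← hΦ]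
  simp [conjTranspose_mul, Matrix.mul_assoc]

lemma HermPreserving.isHermitian_tensId {a b l : ℕ} {Φ : MatC a →ₗ[ℂ] MatC b}
    (hΦ : HermPreserving Φ) {X : Matrix (Fin a × Fin l) (Fin a × Fin l) ℂ}
    (hX : X.IsHermitian) : (tensId Φ l X).IsHermitian := by
  ext p q
  have : (of fun i j => X (i, q.2) (j, p.2)) = (of fun i j => X (i, p.2) (j, q.2))ᴴ := by
    ext i j
    exact (hX.apply _ _).symm
  rw [conjTranspose_apply, tensId, of_apply, of_apply, this, hΦ, conjTranspose_apply, star_star]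

lemma isKPositive_iff_choiForm_nonneg {a b k : ℕ} {Φ : MatC a →ₗ[ℂ] MatC b}
    (hΦ : HermPreserving Φ) :
    IsKPositive Φ k ↔ ∀ G : Matrix (Fin b) (Fin a) ℂ, G.rank ≤ k → 0 ≤ choiForm Φ G := by
  constructor
  · intro hK G hG
    obtain ⟨P, Q, rfl⟩ := exists_mul_eq_of_rank_le hG
    rw [← conjTranspose_conjTranspose Q, ← dotProduct_tensId_vecMulVec]
    exact (hK _ (posSemidef_vecMulVec_self_star _)).dotProduct_mulVec_nonneg _
  · intro h X hX
    refine PosSemidef.of_dotProduct_mulVec_nonneg (hΦ.isHermitian_tensId hX.1) fun y => ?_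
    obtain ⟨r, z, rfl⟩ := posSemidef_iff_eq_sum_vecMulVec.1 hX
    rw [tensId_sum, sum_mulVec, dotProduct_sum]
    refine Finset.sum_nonneg fun t _ => ?_
    have hy : y = vec (of fun i s => y (i, s))ᵀ := rfl
    have hz : z t = vec (of fun c s => z t (c, s))ᵀ := rfl
    rw [hy, hz, dotProduct_tensId_vecMulVec]
    exact h _ ((rank_mul_le_right _ _).trans (rank_le_height _))

lemma isCompletelyPositive_iff_choiForm_nonneg {a b : ℕ} {Φ : MatC a →ₗ[ℂ] MatC b}
    (hΦ : HermPreserving Φ) :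
    IsCompletelyPositive Φ ↔ ∀ G : Matrix (Fin b) (Fin a) ℂ, 0 ≤ choiForm Φ G :=
  ⟨fun h G => (isKPositive_iff_choiForm_nonneg hΦ).1 (h a) G (rank_le_width G),
    fun h _ => (isKPositive_iff_choiForm_nonneg hΦ).2 fun G _ => h G⟩

lemma isCompletelyPositive_adMap_comp_iff {a b c : ℕ} {Φ : MatC a →ₗ[ℂ] MatC b}
    (hΦ : HermPreserving Φ) (W : Matrix (Fin c) (Fin b) ℂ) :
    IsCompletelyPositive (adMap W ∘ₗ Φ) ↔
      ∀ G : Matrix (Fin c) (Fin a) ℂ, 0 ≤ choiForm Φ (Wᴴ * G) := by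
  simp only [isCompletelyPositive_iff_choiForm_nonneg (hΦ.adMap_comp W), choiForm_adMap_comp]

lemma isCompletelyPositive_comp_adMap_iff {a b c : ℕ} {Φ : MatC a →ₗ[ℂ] MatC b}
    (hΦ : HermPreserving Φ) (W : Matrix (Fin a) (Fin c) ℂ) :
    IsCompletelyPositive (Φ ∘ₗ adMap W) ↔
      ∀ G : Matrix (Fin b) (Fin c) ℂ, 0 ≤ choiForm Φ (G * Wᴴ) := by
  simp only [isCompletelyPositive_iff_choiForm_nonneg (hΦ.comp_adMap W), choiForm_comp_adMap]

/-- `Φ` is `k`-positive iff `Ad_{V*}∘Φ` is CP for all `V` with `rk V ≤ k`,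
iff `Φ∘Ad_{V*}` is CP for all such `V`. -/
theorem stmt13 {m n k : ℕ} (Φ : MatC m →ₗ[ℂ] MatC n) (hΦ : HermPreserving Φ) :
    (IsKPositive Φ k ↔
      ∀ V : Matrix (Fin n) (Fin m) ℂ, V.rank ≤ k →
        IsCompletelyPositive (adMap Vᴴ ∘ₗ Φ)) ∧
    (IsKPositive Φ k ↔
      ∀ V : Matrix (Fin n) (Fin m) ℂ, V.rank ≤ k →
        IsCompletelyPositive (Φ ∘ₗ adMap Vᴴ)) := by
  simp only [isKPositive_iff_choiForm_nonneg hΦ, isCompletelyPositive_adMap_comp_iff hΦ,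
    isCompletelyPositive_comp_adMap_iff hΦ, conjTranspose_conjTranspose]
  refine ⟨⟨fun h V hV G => h _ ((rank_mul_le_left V G).trans hV), fun h G hG => ?_⟩,
    ⟨fun h V hV G => h _ ((rank_mul_le_right G V).trans hV), fun h G hG => ?_⟩⟩
  · simpa using h G hG 1
  · simpa using h G hG 1
end

section
/- A Hermiticity-preserving map Φ : B(K) → B(H) is k-positive if and only if Ad_E∘Φ is completely positive for every rank-k orthogonal projection E on H. -/
open Matrix BigOperators ComplexOrder
open scoped Kronecker ComplexConjugate

/-!
If `Φ` is `k`-positive and `rank V = k`, the quadratic form of `(Ad_V ∘ Φ) ⊗ id_j (X)` at `y` is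
that of `(Φ ⊗ id_j)(X)` at `(V ⊗ 1)ᴴ y`, a vector of Schmidt rank at most `k`; every such vector is
`(1 ⊗ W) z` with `z ∈ ℂⁿ ⊗ ℂᵏ`, which moves `W` onto `X` and reduces the claim to `k`-positivity.
Conversely, the `k` columns of any `y ∈ ℂⁿ ⊗ ℂᵏ` span a space of dimension at most `k`, contained
in the range of some rank-`k` orthogonal projection `E`; then `(E ⊗ 1) y = y`, so complete
positivity of `Ad_E ∘ Φ` gives positivity of `(Φ ⊗ id_k)(X)` at `y`.
-/

open Module

/-- Over `ℂ`, `0 ≤ c` forces `c` to be real, so a nonnegative quadratic form is automatically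
Hermitian. -/
theorem Matrix.PosSemidef.of_forall_dotProduct_mulVec_nonneg {ι : Type*} [Fintype ι]
    [DecidableEq ι] {A : Matrix ι ι ℂ} (h : ∀ x, 0 ≤ star x ⬝ᵥ (A *ᵥ x)) : A.PosSemidef := by
  have key (x : EuclideanSpace ℂ ι) :
      inner ℂ (toEuclideanLin A x) x = star (star x.ofLp ⬝ᵥ (A *ᵥ x.ofLp)) := by
    rw [← inner_conj_symm, EuclideanSpace.inner_eq_star_dotProduct, dotProduct_comm]
    rfl
  rw [← isPositive_toEuclideanLin_iff, LinearMap.isPositive_iff,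
    LinearMap.isSymmetric_iff_inner_map_self_real]
  refine ⟨fun x => ?_, fun x => ?_⟩ <;> rw [key, (h _).isSelfAdjoint.star_eq]
  · exact (h _).isSelfAdjoint.star_eq
  · exact h _

theorem Matrix.star_dotProduct_conjTranspose_mul_mul_mulVec {α β : Type*} [Fintype α] [Fintype β]
    (A : Matrix α β ℂ) (M : Matrix α α ℂ) (x : β → ℂ) :
    star x ⬝ᵥ ((Aᴴ * M * A) *ᵥ x) = star (A *ᵥ x) ⬝ᵥ (M *ᵥ (A *ᵥ x)) := by
  simp only [star_mulVec, dotProduct_mulVec, vecMul_vecMul, Matrix.mul_assoc]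

theorem Matrix.exists_mul_eq_of_rank_eq {K m n : Type*} [Field K] [Fintype n] [DecidableEq n]
    (M : Matrix m n K) {k : ℕ} (hM : M.rank = k) :
    ∃ (A : Matrix m (Fin k) K) (B : Matrix (Fin k) n K), A * B = M := by
  let b := Module.finBasisOfFinrankEq K (LinearMap.range M.mulVecLin) hM
  have hcol (t : n) : M.col t ∈ LinearMap.range M.mulVecLin :=
    ⟨Pi.single t 1, mulVec_single_one M t⟩
  refine ⟨of fun s i => (b i : m → K) s, of fun i t => b.repr ⟨M.col t, hcol t⟩ i, ?_⟩
  ext s t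
  have := congr_arg (fun v : LinearMap.range M.mulVecLin => (v : m → K) s)
    (b.sum_repr ⟨M.col t, hcol t⟩)
  simp only [Submodule.coe_sum, Submodule.coe_smul, Finset.sum_apply, Pi.smul_apply,
    smul_eq_mul, col_apply] at this
  simpa only [mul_apply, of_apply, mul_comm] using this

theorem Submodule.exists_le_finrank_eq {K V : Type*} [DivisionRing K] [AddCommGroup V]
    [Module K V] [FiniteDimensional K V] (S : Submodule K V) {k : ℕ}
    (hSk : finrank K S ≤ k) (hk : k ≤ finrank K V) :
    ∃ T : Submodule K V, S ≤ T ∧ finrank K T = k := by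
  induction k, hSk using Nat.le_induction with
  | base => exact ⟨S, le_rfl, rfl⟩
  | succ k _ ih =>
    obtain ⟨T, hST, hT⟩ := ih (Nat.le_of_succ_le hk)
    obtain ⟨v, hv⟩ : ∃ v, v ∉ T := by
      by_contra! hall
      have : T = ⊤ := eq_top_iff.mpr fun v _ => hall v
      rw [this, finrank_top] at hT
      omega
    exact ⟨T ⊔ span K {v}, hST.trans le_sup_left, by rw [finrank_sup_span_singleton hv, hT]⟩

theorem Submodule.exists_starProjection_matrix {𝕜 ι : Type*} [RCLike 𝕜] [Fintype ι]
    [DecidableEq ι] (S : Submodule 𝕜 (EuclideanSpace 𝕜 ι)) :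
    ∃ E : Matrix ι ι 𝕜, E.IsHermitian ∧ E * E = E ∧ E.rank = finrank 𝕜 S ∧
      ∀ x, WithLp.toLp 2 x ∈ S → E *ᵥ x = x := by
  let e := toEuclideanCLM (n := ι) (𝕜 := 𝕜)
  let E := e.symm S.starProjection
  have hP : e E = S.starProjection := e.apply_symm_apply _
  have hE : IsStarProjection E := isStarProjection_starProjection.map e.symm
  refine ⟨E, hE.isSelfAdjoint, hE.isIdempotentElem, ?_, fun x hx => ?_⟩
  · rw [rank_eq_finrank_range_toLin E (EuclideanSpace.basisFun ι 𝕜).toBasis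
      (EuclideanSpace.basisFun ι 𝕜).toBasis, ← toEuclideanLin_eq_toLin_orthonormal,
      ← coe_toEuclideanCLM_eq_toEuclideanLin, hP]
    exact congr_arg (fun T : Submodule 𝕜 _ => finrank 𝕜 T) S.range_starProjection
  · have := congr_arg WithLp.ofLp ((S.starProjection_eq_self_iff).mpr hx)
    rwa [← hP, ofLp_toEuclideanCLM] at this

lemma tensId_adMap_comp {a b c j : ℕ} (Φ : MatC a →ₗ[ℂ] MatC b) (V : Matrix (Fin c) (Fin b) ℂ)
    (X : Matrix (Fin a × Fin j) (Fin a × Fin j) ℂ) :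
    tensId (adMap V ∘ₗ Φ) j X = (V ⊗ₖ (1 : MatC j)) * tensId Φ j X * (V ⊗ₖ (1 : MatC j))ᴴ := by
  ext ⟨s, α⟩ ⟨t, β⟩
  simp [tensId, adMap, mul_apply, Fintype.sum_prod_type, one_apply, Finset.sum_mul, ite_mul,
    apply_ite (starRingEnd ℂ)]

lemma tensId_conj {a b j l : ℕ} (Φ : MatC a →ₗ[ℂ] MatC b)
    (X : Matrix (Fin a × Fin j) (Fin a × Fin j) ℂ) (W : Matrix (Fin j) (Fin l) ℂ) :
    tensId Φ l (((1 : MatC a) ⊗ₖ W)ᴴ * X * ((1 : MatC a) ⊗ₖ W)) =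
      ((1 : MatC b) ⊗ₖ W)ᴴ * tensId Φ j X * ((1 : MatC b) ⊗ₖ W) := by
  have slice (α β : Fin l) :
      (of fun i i' => (((1 : MatC a) ⊗ₖ W)ᴴ * X * ((1 : MatC a) ⊗ₖ W)) (i, α) (i', β)) =
      ∑ q, ∑ p, (star (W p α) * W q β) • of fun i i' => X (i, p) (i', q) := by
    ext i i'
    simp [mul_apply, Fintype.sum_prod_type, one_apply, Matrix.sum_apply, Finset.mul_sum, ite_mul,
      apply_ite (starRingEnd ℂ), mul_comm, mul_left_comm]
  ext ⟨s, α⟩ ⟨t, β⟩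
  rw [tensId, of_apply, slice]
  simp only [map_sum, map_smul, Matrix.sum_apply, Matrix.smul_apply, smul_eq_mul]
  simp [tensId, mul_apply, Fintype.sum_prod_type, one_apply, Finset.mul_sum, ite_mul,
    apply_ite (starRingEnd ℂ), mul_assoc, mul_comm]

/-- Since `vec Y (s, p) = Y p s`, the vectors `vec (W * Z)` are exactly those of Schmidt rank
at most `k`. -/
theorem IsKPositive.dotProduct_tensId_mulVec_vec_mul_nonneg {a b j k : ℕ}
    {Φ : MatC a →ₗ[ℂ] MatC b} (hΦ : IsKPositive Φ k)
    {X : Matrix (Fin a × Fin j) (Fin a × Fin j) ℂ} (hX : X.PosSemidef)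
    (W : Matrix (Fin j) (Fin k) ℂ) (Z : Matrix (Fin k) (Fin b) ℂ) :
    0 ≤ star (vec (W * Z)) ⬝ᵥ (tensId Φ j X *ᵥ vec (W * Z)) := by
  rw [vec_mul_eq_mulVec, ← star_dotProduct_conjTranspose_mul_mul_mulVec, ← tensId_conj]
  exact (hΦ _ (hX.conjTranspose_mul_mul_same _)).dotProduct_mulVec_nonneg _

theorem IsKPositive.isCompletelyPositive_adMap_comp {a b c k : ℕ} {Φ : MatC a →ₗ[ℂ] MatC b}
    (hΦ : IsKPositive Φ k) {V : Matrix (Fin c) (Fin b) ℂ} (hV : V.rank = k) :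
    IsCompletelyPositive (adMap V ∘ₗ Φ) := by
  intro j X hX
  obtain ⟨A, B, hAB⟩ := (Vᴴ)ᵀ.exists_mul_eq_of_rank_eq
    (by rw [rank_transpose, rank_conjTranspose, hV])
  refine PosSemidef.of_forall_dotProduct_mulVec_nonneg fun y => ?_
  obtain ⟨Y, rfl⟩ := vec_bijective.surjective y
  have hVY : (V ⊗ₖ (1 : MatC j))ᴴ *ᵥ vec Y = vec ((Y * A) * B) := by
    rw [conjTranspose_kronecker, conjTranspose_one, kronecker_mulVec_vec, Matrix.one_mul,
      Matrix.mul_assoc, hAB]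
  rw [tensId_adMap_comp]
  nth_rw 1 [← conjTranspose_conjTranspose (V ⊗ₖ (1 : MatC j))]
  rw [star_dotProduct_conjTranspose_mul_mul_mulVec, hVY]
  exact hΦ.dotProduct_tensId_mulVec_vec_mul_nonneg hX _ _

theorem isKPositive_of_forall_isKPositive_adMap_comp {m n k : ℕ} (hk : k ≤ n)
    {Φ : MatC m →ₗ[ℂ] MatC n}
    (h : ∀ E : MatC n, E.IsHermitian → E * E = E → E.rank = k → IsKPositive (adMap E ∘ₗ Φ) k) :
    IsKPositive Φ k := by
  intro X hX
  refine PosSemidef.of_forall_dotProduct_mulVec_nonneg fun y => ?_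
  obtain ⟨Y, rfl⟩ := vec_bijective.surjective y
  set S := Submodule.span ℂ (Set.range fun p => WithLp.toLp 2 (Y p))
  have hS : finrank ℂ S ≤ k := by
    simpa [Set.finrank] using finrank_range_le_card (R := ℂ) fun p => WithLp.toLp 2 (Y p)
  obtain ⟨T, hST, hT⟩ := S.exists_le_finrank_eq hS (by rwa [finrank_euclideanSpace_fin])
  obtain ⟨E, hEh, hEE, hEr, hEfix⟩ := T.exists_starProjection_matrix
  have hEY : (E ⊗ₖ (1 : MatC k))ᴴ *ᵥ vec Y = vec Y := by
    rw [conjTranspose_kronecker, hEh.eq, conjTranspose_one, kronecker_mulVec_vec, Matrix.one_mul]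
    congr 1
    funext p
    rw [mul_apply_eq_vecMul, vecMul_transpose]
    exact hEfix _ (hST (Submodule.subset_span ⟨p, rfl⟩))
  have := (h E hEh hEE (hEr.trans hT) X hX).dotProduct_mulVec_nonneg (vec Y)
  rw [tensId_adMap_comp] at this
  nth_rw 1 [← conjTranspose_conjTranspose (E ⊗ₖ (1 : MatC k))] at this
  rwa [star_dotProduct_conjTranspose_mul_mul_mulVec, hEY] at this

theorem stmt14_general {m n k : ℕ} (hk : k ≤ n) (Φ : MatC m →ₗ[ℂ] MatC n) :
    IsKPositive Φ k ↔
      ∀ E : MatC n, E.IsHermitian → E * E = E → E.rank = k →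
        IsCompletelyPositive (adMap E ∘ₗ Φ) :=
  ⟨fun hpos _ _ _ hrank => hpos.isCompletelyPositive_adMap_comp hrank,
    fun h => isKPositive_of_forall_isKPositive_adMap_comp hk
      fun E hE hEE hrank => h E hE hEE hrank k⟩

/-- `Φ` is `k`-positive iff `Ad_E∘Φ` is CP for every rank-`k` orthogonal projection `E`. -/
theorem stmt14 {m n k : ℕ} (hk : k ≤ n) (Φ : MatC m →ₗ[ℂ] MatC n)
    (hΦ : HermPreserving Φ) :
    IsKPositive Φ k ↔
      ∀ E : MatC n, E.IsHermitian → E * E = E → E.rank = k →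
        IsCompletelyPositive (adMap E ∘ₗ Φ) :=
  stmt14_general hk Φ
end
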